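/- arXiv:2602.01587 — 2 statements merged into one kernel-verified Lean document; each statement's English description precedes it below -/
import Mathlib

section
/- Let f : X → Y be any function (base classifier) and let x, x' be sequences that differ on exactly r semantic positions. Let S be a uniformly random k-subset of the N semantic positions, and suppose the ablated output depends only on the retained tokens (masked invariance). Then for every class c, |P(f(ablate(x,S)) = c) - P(f(ablate(x',S)) = c)| ≤ 1 - C(N-r, k)/C(N, k). -/
/-- Total-variation bound for the smoothed classifier. Let `x, x'` be
token sequences over `N` semantic positions differing in exactly `r` positions, let
`ablate` satisfy masked invariance (the ablated input depends only on retained tokens),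
and let `S` range uniformly over `k`-subsets of the positions. Then for every class `c`,
`|P(f(ablate x S) = c) - P(f(ablate x' S) = c)| ≤ 1 - C(N-r,k)/C(N,k)`. -/
theorem smoothing_total_variation_bound
    {V X Y : Type*} [DecidableEq V] [DecidableEq Y]
    (N r k : ℕ) (hk : k ≤ N)
    (x x' : Fin N → V)
    (hdiff : (Finset.univ.filter (fun i : Fin N => x i ≠ x' i)).card = r)
    (ablate : (Fin N → V) → Finset (Fin N) → X)
    (hinv : ∀ (y y' : Fin N → V) (S : Finset (Fin N)),
      (∀ i ∈ S, y i = y' i) → ablate y S = ablate y' S)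
    (f : X → Y) (c : Y) :
    |((((Finset.univ : Finset (Fin N)).powersetCard k).filter
          (fun S => f (ablate x S) = c)).card : ℝ) / (N.choose k : ℝ)
      - ((((Finset.univ : Finset (Fin N)).powersetCard k).filter
          (fun S => f (ablate x' S) = c)).card : ℝ) / (N.choose k : ℝ)|
      ≤ 1 - ((N - r).choose k : ℝ) / (N.choose k : ℝ) := by
  classical
  set D := Finset.univ.filter (fun i : Fin N => x i ≠ x' i) with hD
  set P := (Finset.univ : Finset (Fin N)).powersetCard k with hP
  set G := (Finset.univ \ D).powersetCard k with hG
  set A := P.filter (fun S => f (ablate x S) = c) with hA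
  set B := P.filter (fun S => f (ablate x' S) = c) with hB
  have hn : (0:ℝ) < (N.choose k : ℝ) := by exact_mod_cast Nat.choose_pos hk
  have hPcard : P.card = N.choose k := by
    rw [hP, Finset.card_powersetCard, Finset.card_univ, Fintype.card_fin]
  have hGcard : G.card = (N - r).choose k := by
    rw [hG, Finset.card_powersetCard, Finset.card_sdiff_of_subset (Finset.subset_univ D),
      Finset.card_univ, Fintype.card_fin, hdiff]
  have hGP : G ⊆ P := by
    intro S hS
    rw [Finset.mem_powersetCard] at hS ⊢
    exact ⟨Finset.subset_univ S, hS.2⟩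
  have hkey : ∀ S ∈ G, ablate x S = ablate x' S := by
    intro S hS
    rw [hG, Finset.mem_powersetCard] at hS
    apply hinv
    intro i hi
    have hiD := hS.1 hi
    rw [Finset.mem_sdiff] at hiD
    have := hiD.2
    rw [hD, Finset.mem_filter] at this
    by_contra hne
    exact this ⟨Finset.mem_univ i, hne⟩
  have hABsub : A ⊆ B ∪ (P \ G) := by
    intro S hS
    rw [hA, Finset.mem_filter] at hS
    by_cases hSG : S ∈ G
    · apply Finset.mem_union_left
      rw [hB, Finset.mem_filter]
      exact ⟨hS.1, by rw [← hkey S hSG]; exact hS.2⟩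
    · exact Finset.mem_union_right _ (Finset.mem_sdiff.mpr ⟨hS.1, hSG⟩)
  have hBAsub : B ⊆ A ∪ (P \ G) := by
    intro S hS
    rw [hB, Finset.mem_filter] at hS
    by_cases hSG : S ∈ G
    · apply Finset.mem_union_left
      rw [hA, Finset.mem_filter]
      exact ⟨hS.1, by rw [hkey S hSG]; exact hS.2⟩
    · exact Finset.mem_union_right _ (Finset.mem_sdiff.mpr ⟨hS.1, hSG⟩)
  have hPG : (P \ G).card = N.choose k - (N - r).choose k := by
    rw [Finset.card_sdiff_of_subset hGP, hPcard, hGcard]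
  have hGle : (N - r).choose k ≤ N.choose k := by
    rw [← hPcard, ← hGcard]; exact Finset.card_le_card hGP
  have h1 : A.card ≤ B.card + (N.choose k - (N - r).choose k) := by
    calc A.card ≤ (B ∪ (P \ G)).card := Finset.card_le_card hABsub
    _ ≤ B.card + (P \ G).card := Finset.card_union_le _ _
    _ = B.card + (N.choose k - (N - r).choose k) := by rw [hPG]
  have h2 : B.card ≤ A.card + (N.choose k - (N - r).choose k) := by
    calc B.card ≤ (A ∪ (P \ G)).card := Finset.card_le_card hBAsub
    _ ≤ A.card + (P \ G).card := Finset.card_union_le _ _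
    _ = A.card + (N.choose k - (N - r).choose k) := by rw [hPG]
  have h1' : (A.card : ℝ) ≤ B.card + ((N.choose k : ℝ) - (N - r).choose k) := by
    have := (Nat.cast_le (α := ℝ)).mpr h1
    push_cast [Nat.cast_sub hGle] at this ⊢
    linarith
  have h2' : (B.card : ℝ) ≤ A.card + ((N.choose k : ℝ) - (N - r).choose k) := by
    have := (Nat.cast_le (α := ℝ)).mpr h2
    push_cast [Nat.cast_sub hGle] at this ⊢
    linarith
  rw [abs_sub_le_iff]
  constructor
  · rw [div_sub_div_same, div_le_iff₀ hn]
    have : (1 - ((N - r).choose k : ℝ) / (N.choose k : ℝ)) * (N.choose k : ℝ)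
        = (N.choose k : ℝ) - (N - r).choose k := by
      field_simp
    rw [this]; linarith
  · rw [div_sub_div_same, div_le_iff₀ hn]
    have : (1 - ((N - r).choose k : ℝ) / (N.choose k : ℝ)) * (N.choose k : ℝ)
        = (N.choose k : ℝ) - (N - r).choose k := by
      field_simp
    rw [this]; linarith
end

section
/- Pointwise tightness: Let N, r, k satisfy r + k ≤ N and let ρ = C(N-r,k)/C(N,k). There exists a base classifier f* (a function from ablated inputs to {A, B}) and inputs x, x' differing in exactly r semantic positions such that P(f*(ablate(x,S)) = A) = 1 while P(f*(ablate(x',S)) = A) = ρ. Consequently, with pA = 1 and pB = 0 on x, the classifier's smoothed decision on x' gives class A probability exactly ρ, so whenever ρ ≤ 1/2 the majority vote can flip. -/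
private lemma filter_val_lt_card (N r : ℕ) (hr : r ≤ N) :
    (Finset.univ.filter (fun i : Fin N => i.val < r)).card = r := by
  rcases eq_or_lt_of_le hr with rfl | hlt
  · rw [Finset.filter_true_of_mem (fun i _ => i.isLt)]
    simp
  · have : (Finset.univ.filter (fun i : Fin N => i.val < r)) =
        Finset.Iio (⟨r, hlt⟩ : Fin N) := by
      ext i; simp [Fin.lt_def]
    rw [this, Fin.card_Iio]

/-- Pointwise tightness of the certification bound. For `r + k ≤ N`
with `ρ = C(N-r,k)/C(N,k)`, there is a base classifier `f*` (into `Bool`, where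
`true` plays the role of class A) and inputs `x, x'` differing in exactly `r`
semantic positions such that, under uniform `k`-subset sampling,
`P(f*(ablate x S) = A) = 1` while `P(f*(ablate x' S) = A) = ρ`; consequently if
`ρ ≤ 1/2` the smoothed top-class probability on `x'` is at most `1/2` (the majority
vote can flip). -/
theorem certification_bound_tight
    (N r k : ℕ) (h : r + k ≤ N) :
    ∃ (V : Type) (_ : DecidableEq V)
      (f : Finset (Fin N) × (Fin N → Option V) → Bool) (x x' : Fin N → V),
      (∃ _ : DecidablePred (fun i : Fin N => x i ≠ x' i),
        (Finset.univ.filter (fun i : Fin N => x i ≠ x' i)).card = r) ∧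
      ((((Finset.univ : Finset (Fin N)).powersetCard k).filter
          (fun S => f (S, fun i => if i ∈ S then some (x i) else none) = true)).card : ℝ)
          / (N.choose k : ℝ) = 1 ∧
      ((((Finset.univ : Finset (Fin N)).powersetCard k).filter
          (fun S => f (S, fun i => if i ∈ S then some (x' i) else none) = true)).card : ℝ)
          / (N.choose k : ℝ) = ((N - r).choose k : ℝ) / (N.choose k : ℝ) ∧
      (((N - r).choose k : ℝ) / (N.choose k : ℝ) ≤ 1 / 2 →
        ((((Finset.univ : Finset (Fin N)).powersetCard k).filter
            (fun S => f (S, fun i => if i ∈ S then some (x' i) else none) = true)).card : ℝ)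
            / (N.choose k : ℝ) ≤ 1 / 2) := by
  have hrN : r ≤ N := le_trans (Nat.le_add_right r k) h
  have hkN : k ≤ N := le_trans (Nat.le_add_left k r) h
  have hchoose : (0:ℝ) < (N.choose k : ℝ) := by
    exact_mod_cast Nat.choose_pos hkN
  set f : Finset (Fin N) × (Fin N → Option ℕ) → Bool :=
    fun p => decide (∀ i ∈ p.1, p.2 i = some 0) with hf
  set x : Fin N → ℕ := fun _ => 0 with hx
  set x' : Fin N → ℕ := fun i => if i.val < r then 1 else 0 with hx'
  have h1 : (Finset.univ.filter (fun i : Fin N => i.val < r)).card = r :=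
    filter_val_lt_card N r hrN
  have key : (((Finset.univ : Finset (Fin N)).powersetCard k).filter
      (fun S => f (S, fun i => if i ∈ S then some (x' i) else none) = true)).card
      = (N - r).choose k := by
    have heq : (((Finset.univ : Finset (Fin N)).powersetCard k).filter
        (fun S => f (S, fun i => if i ∈ S then some (x' i) else none) = true)) =
        (Finset.univ.filter (fun i : Fin N => ¬ i.val < r)).powersetCard k := by
      ext S
      simp only [hf, hx', Finset.mem_filter, Finset.mem_powersetCard, Finset.subset_univ,
        true_and, decide_eq_true_eq, Finset.subset_iff, Finset.mem_filter, Finset.mem_univ]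
      constructor
      · rintro ⟨⟨-, hc⟩, hall⟩
        refine ⟨fun i hi hir => ?_, hc⟩
        have := hall i hi
        simp [hi, hir] at this
      · rintro ⟨hsub, hc⟩
        refine ⟨⟨fun _ _ => trivial, hc⟩, fun i hi => ?_⟩
        simp only [hi, if_true, Option.some.injEq]
        rw [if_neg (hsub hi)]
    rw [heq, Finset.card_powersetCard]
    congr 1
    have h2 := Finset.card_filter_add_card_filter_not
      (s := (Finset.univ : Finset (Fin N))) (p := fun i : Fin N => i.val < r)
    rw [Finset.card_univ, Fintype.card_fin] at h2
    omega
  refine ⟨ℕ, inferInstance, f, x, x', ?_, ?_, ?_, ?_⟩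
  · refine ⟨inferInstance, ?_⟩
    have : (Finset.univ.filter (fun i : Fin N => x i ≠ x' i)) =
        Finset.univ.filter (fun i : Fin N => i.val < r) := by
      ext i
      by_cases hi : i.val < r <;> simp [hx, hx', hi]
    rw [this, h1]
  · have : (((Finset.univ : Finset (Fin N)).powersetCard k).filter
        (fun S => f (S, fun i => if i ∈ S then some (x i) else none) = true)) =
        ((Finset.univ : Finset (Fin N)).powersetCard k) := by
      apply Finset.filter_true_of_mem
      intro S _
      simp [hf, hx]
    rw [this, Finset.card_powersetCard, Finset.card_univ, Fintype.card_fin]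
    field_simp
  · rw [key]
  · intro hrho
    rw [key]
    exact hrho
end
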